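/- arXiv:0906.4514 — 2 statements merged into one kernel-verified Lean document; each statement's English description precedes it below -/
import Mathlib

section
/- For I(x) = (x+δ)²/(2σ²) and z ≥ δ/6, the function ψ*(t) = 3(z + δ/2)(t − t²/2) − δt on [0,1] satisfies ψ*(0)=0, ψ* ≥ 0 on [0,1], ∫₀¹ ψ*(t) dt = z, ψ*'(1) = −δ, and ∫₀¹ I(ψ*'(t)) dt = (3/(2σ²))(z + δ/2)². -/
/-!
Writing `c = 3 (z + δ/2)`, the path is `ψ t = t (c (1 - t/2) - δ)` with velocity
`ψ' t = c (1 - t) - δ`. The condition `z ≥ δ/6` is exactly `c ≥ 2δ`, which keeps the second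
factor of `ψ` nonnegative on `[0, 1]`; and `ψ' + δ = c (1 - t)`, so the action is
`c² / (2σ²) ∫₀¹ (1 - t)² dt = c² / (6σ²)`.
-/

open Set Real

noncomputable def quadraticPath (c b t : ℝ) : ℝ := c * (t - t ^ 2 / 2) - b * t

theorem hasDerivAt_quadraticPath (c b t : ℝ) :
    HasDerivAt (quadraticPath c b) (c * (1 - t) - b) t := by
  have h := (((hasDerivAt_id t).sub ((hasDerivAt_pow 2 t).div_const 2)).const_mul c).sub
    ((hasDerivAt_id t).const_mul b)
  exact h.congr_deriv (by simp)

theorem deriv_quadraticPath (c b : ℝ) :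
    deriv (quadraticPath c b) = fun t => c * (1 - t) - b :=
  funext fun t => (hasDerivAt_quadraticPath c b t).deriv

theorem quadraticPath_nonneg {c b t : ℝ} (hb : 0 ≤ b) (hcb : 2 * b ≤ c) (ht : t ∈ Icc (0 : ℝ) 1) :
    0 ≤ quadraticPath c b t := by
  obtain ⟨ht0, ht1⟩ := ht
  have hfactor : 0 ≤ c * (1 - t / 2) - b := by nlinarith
  calc (0 : ℝ) ≤ t * (c * (1 - t / 2) - b) := mul_nonneg ht0 hfactor
    _ = quadraticPath c b t := by unfold quadraticPath; ring

theorem integral_quadraticPath (c b : ℝ) :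
    ∫ t in (0 : ℝ)..1, quadraticPath c b t = c / 3 - b / 2 := by
  unfold quadraticPath
  rw [intervalIntegral.integral_sub, intervalIntegral.integral_const_mul,
    intervalIntegral.integral_sub, intervalIntegral.integral_div, intervalIntegral.integral_const_mul]
  · simp only [integral_id, integral_pow]
    ring
  all_goals exact Continuous.intervalIntegrable (by fun_prop) _ _

theorem integral_sq_deriv_quadraticPath_add (c b : ℝ) :
    ∫ t in (0 : ℝ)..1, (deriv (quadraticPath c b) t + b) ^ 2 = c ^ 2 / 3 := by
  simp only [deriv_quadraticPath, sub_add_cancel, mul_pow]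
  rw [intervalIntegral.integral_const_mul, intervalIntegral.integral_comp_sub_left (fun t => t ^ 2)]
  norm_num
  ring

theorem gaussian_optimal_path_large_z_general
    (δ σ z : ℝ) (hδ : 0 < δ) (hz : δ / 6 ≤ z)
    (I ψ : ℝ → ℝ)
    (hI : ∀ x, I x = (x + δ) ^ 2 / (2 * σ ^ 2))
    (hψ : ∀ t, ψ t = 3 * (z + δ / 2) * (t - t ^ 2 / 2) - δ * t) :
    ψ 0 = 0 ∧
    (∀ t ∈ Icc (0:ℝ) 1, 0 ≤ ψ t) ∧
    (∫ t in (0:ℝ)..1, ψ t) = z ∧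
    deriv ψ 1 = -δ ∧
    (∫ t in (0:ℝ)..1, I (deriv ψ t)) = 3 / (2 * σ ^ 2) * (z + δ / 2) ^ 2 := by
  obtain rfl : ψ = quadraticPath (3 * (z + δ / 2)) δ := funext hψ
  simp only [hI]
  refine ⟨by simp [quadraticPath], fun t ht => quadraticPath_nonneg hδ.le (by linarith) ht,
    by rw [integral_quadraticPath]; ring, by simp [deriv_quadraticPath], ?_⟩
  rw [intervalIntegral.integral_div, integral_sq_deriv_quadraticPath_add]
  ring

theorem gaussian_optimal_path_large_z
    (δ σ z : ℝ) (hδ : 0 < δ) (hσ : 0 < σ) (hz : δ / 6 ≤ z)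
    (I ψ : ℝ → ℝ)
    (hI : ∀ x, I x = (x + δ) ^ 2 / (2 * σ ^ 2))
    (hψ : ∀ t, ψ t = 3 * (z + δ / 2) * (t - t ^ 2 / 2) - δ * t) :
    ψ 0 = 0 ∧
    (∀ t ∈ Icc (0:ℝ) 1, 0 ≤ ψ t) ∧
    (∫ t in (0:ℝ)..1, ψ t) = z ∧
    deriv ψ 1 = -δ ∧
    (∫ t in (0:ℝ)..1, I (deriv ψ t)) = 3 / (2 * σ ^ 2) * (z + δ / 2) ^ 2 :=
  gaussian_optimal_path_large_z_general δ σ z hδ hz I ψ hI hψ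
end

section
/- Suppose I : ℝ → [0,∞] is convex lower semicontinuous with I(−δ) = 0 for some δ > 0, and ψ, ψ⁰ : [0,1] → ℝ are absolutely continuous non-negative, where ψ⁰ is the concave majorant-type replacement with ∫₀¹ I(ψ⁰'(t)) dt computed via a rearrangement of the derivative of ψ into non-increasing order. Then ∫₀¹ I((ψ⁰)'(t)) dt ≤ ∫₀¹ I(ψ'(t)) dt and ∫₀¹ ψ⁰(t) dt ≥ ∫₀¹ ψ(t) dt. (Rearranging the derivative in decreasing order preserves the integral cost and increases area when endpoints match.) -/
open Set Real MeasureTheory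

/-!
Equimeasurability of `g` and `g₀` means that both push the Lebesgue measure on `[0,1]` forward to
the same law, so `∫ F ∘ g = ∫ F ∘ g₀` for every continuous `F`; with `F = I` this is the first
claim. For the second, fix `t` and put `c = g₀ t`. Since `g₀` is non-increasing, `(g₀ - c)⁺`
vanishes after `t` and equals `g₀ - c` before `t`, whence
`∫₀ᵗ (g - c) ≤ ∫₀¹ (g - c)⁺ = ∫₀¹ (g₀ - c)⁺ = ∫₀ᵗ (g₀ - c)`, i.e. `ψ t ≤ ψ₀ t`.
-/

section Equimeasurable

variable {α : Type*} [MeasurableSpace α] {μ : Measure α}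

theorem map_eq_map_of_measure_le_eq [IsFiniteMeasure μ] {f f₀ : α → ℝ}
    (hf : AEMeasurable f μ) (hf₀ : AEMeasurable f₀ μ)
    (h : ∀ c, μ {x | f x ≤ c} = μ {x | f₀ x ≤ c}) : μ.map f = μ.map f₀ :=
  Measure.ext_of_Iic _ _ fun c => by
    rw [Measure.map_apply_of_aemeasurable hf measurableSet_Iic,
      Measure.map_apply_of_aemeasurable hf₀ measurableSet_Iic]
    exact h c

variable {β E : Type*} [MeasurableSpace β] {f f₀ : α → β}

theorem integral_comp_eq_of_map_eq [NormedAddCommGroup E] [NormedSpace ℝ E]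
    (hf : AEMeasurable f μ) (hf₀ : AEMeasurable f₀ μ) (hmap : μ.map f = μ.map f₀)
    {F : β → E} (hF : AEStronglyMeasurable F (μ.map f)) :
    ∫ x, F (f x) ∂μ = ∫ x, F (f₀ x) ∂μ := by
  rw [← integral_map hf hF, hmap, integral_map hf₀ (hmap ▸ hF)]

theorem integrable_comp_iff_of_map_eq [NormedAddCommGroup E]
    (hf : AEMeasurable f μ) (hf₀ : AEMeasurable f₀ μ) (hmap : μ.map f = μ.map f₀)
    {F : β → E} (hF : AEStronglyMeasurable F (μ.map f)) :
    Integrable (F ∘ f) μ ↔ Integrable (F ∘ f₀) μ := by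
  rw [← integrable_map_measure hF hf, hmap, integrable_map_measure (hmap ▸ hF) hf₀]

end Equimeasurable

section Derivative

variable {ψ g : ℝ → ℝ}

theorem aemeasurable_restrict_of_hasDerivAt {μ : Measure ℝ} {s : Set ℝ} (hs : MeasurableSet s)
    (hψ : ∀ t ∈ s, HasDerivAt ψ (g t) t) : AEMeasurable g (μ.restrict s) :=
  (measurable_deriv ψ).aemeasurable.congr <|
    (ae_restrict_iff' hs).mpr (ae_of_all _ fun t ht => (hψ t ht).deriv)

theorem setIntegral_Icc_eq_sub_of_hasDerivAt {a t : ℝ} (hat : a ≤ t)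
    (hψ : ∀ s ∈ Icc a t, HasDerivAt ψ (g s) s) (hg : IntegrableOn g (Icc a t)) :
    ∫ s in Icc a t, g s = ψ t - ψ a := by
  rw [integral_Icc_eq_integral_Ioc, ← intervalIntegral.integral_of_le hat]
  refine intervalIntegral.integral_eq_sub_of_hasDerivAt (fun s hs => hψ s ?_) ?_
  · rwa [uIcc_of_le hat] at hs
  · exact (intervalIntegrable_iff_integrableOn_Icc_of_le hat).mpr hg

theorem integrableOn_Icc_of_hasDerivAt {a b : ℝ} (hψ : ∀ t ∈ Icc a b, HasDerivAt ψ (g t) t) :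
    IntegrableOn ψ (Icc a b) :=
  ContinuousOn.integrableOn_Icc fun t ht => (hψ t ht).continuousAt.continuousWithinAt

end Derivative

theorem setIntegral_Icc_le_of_antitoneOn {g g₀ : ℝ → ℝ} {a b t : ℝ} (ht : t ∈ Icc a b)
    (hg : IntegrableOn g (Icc a b)) (hanti : AntitoneOn g₀ (Icc a b))
    (hpos : ∫ s in Icc a b, max (g s - g₀ t) 0 = ∫ s in Icc a b, max (g₀ s - g₀ t) 0) :
    ∫ s in Icc a t, g s ≤ ∫ s in Icc a t, g₀ s := by
  set c := g₀ t
  have hsub : Icc a t ⊆ Icc a b := Icc_subset_Icc_right ht.2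
  have hg₀ : IntegrableOn g₀ (Icc a b) := hanti.integrableOn_isCompact isCompact_Icc
  have hc : IntegrableOn (fun _ => c) (Icc a b) := integrableOn_const measure_Icc_lt_top.ne
  have hgc : IntegrableOn (fun s => max (g s - c) 0) (Icc a b) := (hg.sub hc).pos_part
  have hshifted : ∫ s in Icc a t, (g s - c) ≤ ∫ s in Icc a t, (g₀ s - c) :=
    calc ∫ s in Icc a t, (g s - c)
        ≤ ∫ s in Icc a t, max (g s - c) 0 :=
          integral_mono ((hg.sub hc).mono_set hsub) (hgc.mono_set hsub)
            fun s => le_max_left _ _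
      _ ≤ ∫ s in Icc a b, max (g s - c) 0 :=
          setIntegral_mono_set hgc (ae_of_all _ fun s => le_max_right _ _)
            (ae_of_all _ hsub)
      _ = ∫ s in Icc a b, max (g₀ s - c) 0 := hpos
      _ = ∫ s in Icc a t, max (g₀ s - c) 0 :=
          setIntegral_eq_of_subset_of_forall_sdiff_eq_zero measurableSet_Icc hsub
            fun s ⟨hs, hst⟩ => max_eq_right <| sub_nonpos.mpr <|
              hanti ht hs (le_of_not_ge fun h => hst ⟨hs.1, h⟩)
      _ = ∫ s in Icc a t, (g₀ s - c) :=
          setIntegral_congr_fun measurableSet_Icc fun s hs =>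
            max_eq_left <| sub_nonneg.mpr <| hanti (hsub hs) ht hs.2
  rwa [integral_sub (hg.mono_set hsub) (hc.mono_set hsub),
    integral_sub (hg₀.mono_set hsub) (hc.mono_set hsub), sub_le_sub_iff_right] at hshifted

theorem decreasing_rearrangement_improves_general
    (I : ℝ → ℝ) (hIconv : ConvexOn ℝ univ I)
    (ψ ψ₀ g g₀ : ℝ → ℝ)
    (hψd : ∀ t ∈ Icc (0:ℝ) 1, HasDerivAt ψ (g t) t)
    (hψ₀d : ∀ t ∈ Icc (0:ℝ) 1, HasDerivAt ψ₀ (g₀ t) t)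
    (hψ0 : ψ 0 = 0)
    (hψ₀0 : ψ₀ 0 = 0)
    (hg₀anti : AntitoneOn g₀ (Icc (0:ℝ) 1))
    (hrearr : ∀ c : ℝ,
      volume {t ∈ Icc (0:ℝ) 1 | g t ≤ c} = volume {t ∈ Icc (0:ℝ) 1 | g₀ t ≤ c}) :
    (∫ t in Icc (0:ℝ) 1, I (g₀ t)) ≤ (∫ t in Icc (0:ℝ) 1, I (g t)) ∧
    (∫ t in Icc (0:ℝ) 1, ψ t) ≤ (∫ t in Icc (0:ℝ) 1, ψ₀ t) := by
  have hg := aemeasurable_restrict_of_hasDerivAt (μ := volume) measurableSet_Icc hψd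
  have hg₀ := aemeasurable_restrict_of_hasDerivAt (μ := volume) measurableSet_Icc hψ₀d
  have hmap := map_eq_map_of_measure_le_eq hg hg₀ fun c => by
    rw [Measure.restrict_apply' measurableSet_Icc, Measure.restrict_apply' measurableSet_Icc,
      inter_comm, inter_comm {x | g₀ x ≤ c}]
    exact hrearr c
  have hcomp : ∀ F : ℝ → ℝ, Continuous F →
      ∫ t in Icc (0:ℝ) 1, F (g t) = ∫ t in Icc (0:ℝ) 1, F (g₀ t) := fun F hF =>
    integral_comp_eq_of_map_eq hg hg₀ hmap hF.aestronglyMeasurable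
  refine ⟨(hcomp I hIconv.locallyLipschitz.continuous).ge, ?_⟩
  have hg₀int : IntegrableOn g₀ (Icc 0 1) := hg₀anti.integrableOn_isCompact isCompact_Icc
  have hgint : IntegrableOn g (Icc 0 1) :=
    (integrable_comp_iff_of_map_eq (F := id) hg hg₀ hmap aestronglyMeasurable_id).mpr hg₀int
  have hle : ∀ t ∈ Icc (0:ℝ) 1, ψ t ≤ ψ₀ t := fun t ht => by
    have hsub : Icc 0 t ⊆ Icc 0 1 := Icc_subset_Icc_right ht.2
    have hψt := setIntegral_Icc_eq_sub_of_hasDerivAt ht.1 (fun s hs => hψd s (hsub hs))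
      (hgint.mono_set hsub)
    have hψ₀t := setIntegral_Icc_eq_sub_of_hasDerivAt ht.1 (fun s hs => hψ₀d s (hsub hs))
      (hg₀int.mono_set hsub)
    have := setIntegral_Icc_le_of_antitoneOn ht hgint hg₀anti
      (hcomp (fun x => max (x - g₀ t) 0) (by fun_prop))
    linarith
  exact setIntegral_mono_on (integrableOn_Icc_of_hasDerivAt hψd)
    (integrableOn_Icc_of_hasDerivAt hψ₀d) measurableSet_Icc hle

theorem decreasing_rearrangement_improves
    (δ : ℝ) (hδ : 0 < δ)
    (I : ℝ → ℝ) (hIconv : ConvexOn ℝ univ I) (hInn : ∀ x, 0 ≤ I x)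
    (hIδ : I (-δ) = 0)
    (ψ ψ₀ g g₀ : ℝ → ℝ)
    (hψd : ∀ t ∈ Icc (0:ℝ) 1, HasDerivAt ψ (g t) t)
    (hψ₀d : ∀ t ∈ Icc (0:ℝ) 1, HasDerivAt ψ₀ (g₀ t) t)
    (hψ0 : ψ 0 = 0) (hψ1 : ψ 1 = 0) (hψnn : ∀ t ∈ Icc (0:ℝ) 1, 0 ≤ ψ t)
    (hψ₀0 : ψ₀ 0 = 0)
    (hg₀anti : AntitoneOn g₀ (Icc (0:ℝ) 1))
    (hrearr : ∀ c : ℝ,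
      volume {t ∈ Icc (0:ℝ) 1 | g t ≤ c} = volume {t ∈ Icc (0:ℝ) 1 | g₀ t ≤ c})
    (hgint : IntegrableOn (fun t => I (g t)) (Icc (0:ℝ) 1))
    (hg₀int : IntegrableOn (fun t => I (g₀ t)) (Icc (0:ℝ) 1)) :
    (∫ t in Icc (0:ℝ) 1, I (g₀ t)) ≤ (∫ t in Icc (0:ℝ) 1, I (g t)) ∧
    (∫ t in Icc (0:ℝ) 1, ψ t) ≤ (∫ t in Icc (0:ℝ) 1, ψ₀ t) :=
  decreasing_rearrangement_improves_general I hIconv ψ ψ₀ g g₀ hψd hψ₀d hψ0 hψ₀0 hg₀anti hrearr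
end
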